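/- Local insertion of patterns into bond trees (Proposition 3.1, bond-tree case of Axiom (CA4) on Z^d): Let d ≥ 2 and let P = (P_1, P_2) be a proper pattern for bond trees on Z^d. Then there exists a finite set D of sites and bonds of Z^d with the following property: for every bond tree G on Z^d and every site y of G, there exist a bond tree G' and a vector t ∈ Z^d such that y is a site of D+t, G' contains the pattern P+t, and the sets of sites and bonds of G' lying outside D+t coincide exactly with the sets of sites and bonds of G lying outside D+t. -/

import Mathlib

open Filter

/-- A site of the `d`-dimensional hypercubic lattice. -/
abbrev Site (d : ℕ) := Fin d → ℤ

/-- A (pre)graph in `ℤ^d`: a finite set of sites together with a finite set of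
(unordered) bonds.  No conditions are imposed at this stage; this is also used as a
container for the two parts of a pattern, and for the set `D` of Axiom (CA4). -/
structure PreGraph (d : ℕ) where
  sites : Finset (Site d)
  bonds : Finset (Sym2 (Site d))

/-- `b` is a bond of the hypercubic lattice `ℤ^d`: an unordered pair `{x,y}` with
`‖x - y‖₁ = 1`. -/
def IsLatticeBond {d : ℕ} (b : Sym2 (Site d)) : Prop :=
  ∃ x y : Site d, b = s(x, y) ∧ (∑ i, |x i - y i|) = 1

/-- Adjacency inside the graph `G`. -/
def Adj {d : ℕ} (G : PreGraph d) (x y : Site d) : Prop := s(x, y) ∈ G.bonds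

/-- `G` is a (bond) animal with respect to the set of allowed lattice bonds `Bd`:
a finite nonempty connected subgraph of the lattice whose bond set is `Bd`. -/
def IsAnimalOn {d : ℕ} (Bd : Sym2 (Site d) → Prop) (G : PreGraph d) : Prop :=
  G.sites.Nonempty ∧
  (∀ b ∈ G.bonds, Bd b) ∧
  (∀ b ∈ G.bonds, ∀ x ∈ b, x ∈ G.sites) ∧
  (∀ x ∈ G.sites, ∀ y ∈ G.sites, Relation.ReflTransGen (Adj G) x y)

/-- A bond animal on the hypercubic lattice `ℤ^d`. -/
def IsBondAnimal {d : ℕ} (G : PreGraph d) : Prop := IsAnimalOn IsLatticeBond G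

/-- `G` contains a cycle: there are `n ≥ 3` distinct sites arranged cyclically with
consecutive ones joined by bonds of `G`. -/
def HasCycle {d : ℕ} (G : PreGraph d) : Prop :=
  ∃ (n : ℕ) (f : ZMod n → Site d), 3 ≤ n ∧ Function.Injective f ∧
    ∀ i : ZMod n, s(f i, f (i + 1)) ∈ G.bonds

/-- A bond tree: a bond animal containing no cycles. -/
def IsBondTree {d : ℕ} (G : PreGraph d) : Prop := IsBondAnimal G ∧ ¬ HasCycle G

/-- A site animal: a bond animal containing every lattice bond both of whose
endpoints are sites of the animal. -/
def IsSiteAnimal {d : ℕ} (G : PreGraph d) : Prop :=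
  IsBondAnimal G ∧
  ∀ b : Sym2 (Site d), IsLatticeBond b → (∀ x ∈ b, x ∈ G.sites) → b ∈ G.bonds

/-- The translateCluster `G + u`. -/
def translateCluster {d : ℕ} (G : PreGraph d) (u : Site d) : PreGraph d :=
  ⟨G.sites.image (· + u), G.bonds.image (Sym2.map (· + u))⟩

/-- `G` contains the pattern `(P₁, P₂)`: all sites and bonds of `P₁` belong to `G`,
and no site or bond of `P₂` belongs to `G`. -/
def ContainsPattern {d : ℕ} (G P₁ P₂ : PreGraph d) : Prop :=
  P₁.sites ⊆ G.sites ∧ P₁.bonds ⊆ G.bonds ∧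
  (∀ x ∈ P₂.sites, x ∉ G.sites) ∧ (∀ b ∈ P₂.bonds, b ∉ G.bonds)

/-- `(P₁, P₂)` is a pattern: `P₁` and `P₂` are (finite) disjoint sets of sites and
bonds, with `P₁` nonempty. -/
def IsPattern {d : ℕ} (P₁ P₂ : PreGraph d) : Prop :=
  (P₁.sites.Nonempty ∨ P₁.bonds.Nonempty) ∧
  Disjoint P₁.sites P₂.sites ∧ Disjoint P₁.bonds P₂.bonds

/-- `(P₁, P₂)` is a proper pattern for the class `C` of clusters: for infinitely
many `n`, some cluster in `C` of size `n` contains the pattern. -/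
def ProperFor {d : ℕ} (C : PreGraph d → Prop) (P₁ P₂ : PreGraph d) : Prop :=
  {n : ℕ | ∃ G : PreGraph d, C G ∧ G.sites.card = n ∧ ContainsPattern G P₁ P₂}.Infinite

/-- `|τ_P(G)|`: the number of translates of the pattern `(P₁, P₂)` occurring in `G`. -/
noncomputable def patternCount {d : ℕ} (P₁ P₂ G : PreGraph d) : ℕ :=
  {x : Site d | ContainsPattern G (translateCluster P₁ x) (translateCluster P₂ x)}.ncard

/-- Lexicographic (strict) order on sites. -/
def LexLt {d : ℕ} (x y : Site d) : Prop :=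
  ∃ i : Fin d, (∀ j, j < i → x j = y j) ∧ x i < y i

/-- The lexicographically smallest site of `G` is the origin. -/
def LexMinAtOrigin {d : ℕ} (G : PreGraph d) : Prop :=
  (0 : Site d) ∈ G.sites ∧ ∀ x ∈ G.sites, x = 0 ∨ LexLt 0 x

/-- `C*_n` for the class `C`: clusters in `C` of size `n` (number of sites) whose
lexicographically smallest site is the origin; one representative per translation
class. -/
def Cstar {d : ℕ} (C : PreGraph d → Prop) (n : ℕ) : Set (PreGraph d) :=
  {G | C G ∧ G.sites.card = n ∧ LexMinAtOrigin G}

open scoped ENNReal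

/-- Axiom (CA2) for an `ℝ≥0∞`-valued weight function on the class `C`. -/
def CA2 {d : ℕ} (C : PreGraph d → Prop) (wt : PreGraph d → ℝ≥0∞) : Prop :=
  ∀ m : ℕ, ∃ γ : ℝ≥0∞, γ ≠ 0 ∧ γ ≠ ⊤ ∧
    ∀ G G' : PreGraph d, C G → C G' →
      (symmDiff G.sites G'.sites).card + (symmDiff G.bonds G'.bonds).card ≤ m →
      wt G / γ ≤ wt G' ∧ wt G' ≤ γ * wt G

/-- A weight function on the class `C`: positive and finite on clusters,
translation invariant, and satisfying (CA2). -/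
def IsWeight {d : ℕ} (C : PreGraph d → Prop) (wt : PreGraph d → ℝ≥0∞) : Prop :=
  (∀ G, C G → wt G ≠ 0 ∧ wt G ≠ ⊤) ∧
  (∀ (G : PreGraph d) (u : Site d), wt (translateCluster G u) = wt G) ∧
  CA2 C wt

/-- Weighted sum of a set of clusters (`ℝ≥0∞`-valued weights). -/
noncomputable def Gsum {d : ℕ} (S : Set (PreGraph d)) (wt : PreGraph d → ℝ≥0∞) : ℝ≥0∞ :=
  ∑' G : S, wt G

/-- Weighted sum of a set of clusters (real-valued weights). -/
noncomputable def GsumR {d : ℕ} (S : Set (PreGraph d)) (f : PreGraph d → ℝ) : ℝ :=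
  ∑' G : S, f G

/-- `mono(G)`: the number of lattice bonds not in `G` with both endpoints in `G`. -/
noncomputable def monoCount {d : ℕ} (G : PreGraph d) : ℕ :=
  {b : Sym2 (Site d) | IsLatticeBond b ∧ b ∉ G.bonds ∧ ∀ x ∈ b, x ∈ G.sites}.ncard

/-- `solv(G)`: the number of lattice bonds not in `G` with exactly one endpoint in `G`. -/
noncomputable def solvCount {d : ℕ} (G : PreGraph d) : ℕ :=
  {b : Sym2 (Site d) | IsLatticeBond b ∧ b ∉ G.bonds ∧
    ∃ x y : Site d, b = s(x, y) ∧ x ∈ G.sites ∧ y ∉ G.sites}.ncard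

/-!
Translate so that `y` is the origin. Choose `r` with `P₂` inside `cube r`, and a bond tree `H`
containing the pattern with more than `(2r+1)^d = #(cube r)` sites; then `H` has a site `h` outside
`cube r`, and `H ⊆ cube m` for some `m ≥ r`. Let `D` be the lattice graph on `cube (m + 1)`.
Given a tree `G`, keep everything of `G` outside `D` and put inside it the sites of `H` and of the
annulus `cube (m + 1) \ cube r`, with all lattice bonds between them except those of `P₂`. This
graph is connected: since `d ≥ 2` the annulus is connected, it contains `h`, and every bond of `G`
leaving `D` ends in it. The kept bonds of `G` and the bonds of `H` live in the disjoint regions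
outside and inside `cube m`, so together they are acyclic and extend to a spanning tree. That tree
contains `P₁ ⊆ H` and avoids `P₂`, which lies in `cube r`, away from the annulus and the kept bonds.
-/

open Finset Function Relation

variable {d : ℕ}

section Lattice

theorem isLatticeBond_mk_iff {x y : Site d} : IsLatticeBond s(x, y) ↔ ∑ i, |x i - y i| = 1 := by
  refine ⟨?_, fun h => ⟨x, y, rfl, h⟩⟩
  rintro ⟨u, v, huv, h⟩
  rcases Sym2.eq_iff.mp huv with ⟨rfl, rfl⟩ | ⟨rfl, rfl⟩
  · exact h
  · simpa only [abs_sub_comm] using h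

theorem abs_sub_le_one_of_isLatticeBond {x y : Site d} (h : IsLatticeBond s(x, y)) (j : Fin d) :
    |x j - y j| ≤ 1 :=
  isLatticeBond_mk_iff.mp h ▸
    Finset.single_le_sum (f := fun i => |x i - y i|) (fun _ _ => abs_nonneg _) (mem_univ j)

theorem IsLatticeBond.map_add {b : Sym2 (Site d)} (hb : IsLatticeBond b) (u : Site d) :
    IsLatticeBond (b.map (· + u)) := by
  obtain ⟨x, y, rfl, h⟩ := hb
  simpa [isLatticeBond_mk_iff] using h

theorem isLatticeBond_update_add_one (z : Site d) (j : Fin d) (c : ℤ) :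
    IsLatticeBond s(update z j c, update z j (c + 1)) := by
  rw [isLatticeBond_mk_iff, Fintype.sum_eq_single j fun _ hi => by simp [update_of_ne hi]]
  simp

instance (G : PreGraph d) : Std.Symm (Adj G) := ⟨fun _ _ h => by rwa [Adj, Sym2.eq_swap]⟩

end Lattice

section Cube

noncomputable def cube (r : ℕ) : Finset (Site d) := Icc (fun _ => -(r : ℤ)) (fun _ => (r : ℤ))

theorem mem_cube {r : ℕ} {x : Site d} : x ∈ cube r ↔ ∀ j, |x j| ≤ r := by
  simp only [cube, mem_Icc, Pi.le_def, abs_le, forall_and]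

theorem cube_mono {r s : ℕ} (h : r ≤ s) : (cube r : Finset (Site d)) ⊆ cube s := fun x hx =>
  mem_cube.mpr fun j => (mem_cube.mp hx j).trans (by exact_mod_cast h)

theorem card_cube (r : ℕ) : (cube r : Finset (Site d)).card = (2 * r + 1) ^ d := by
  simp only [cube, Pi.card_Icc, Int.card_Icc, prod_const, card_univ, Fintype.card_fin]
  congr 1
  omega

theorem zero_mem_cube (r : ℕ) : (0 : Site d) ∈ cube r := mem_cube.mpr fun j => by simp

theorem exists_subset_cube (S : Finset (Site d)) : ∃ r, S ⊆ cube r := by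
  let N : Site d → ℕ := fun x => univ.sup fun j => (x j).natAbs
  refine ⟨S.sup N, fun x hx => mem_cube.mpr fun j => ?_⟩
  have : (x j).natAbs ≤ S.sup N :=
    (le_sup (f := fun j => (x j).natAbs) (mem_univ j)).trans (le_sup (f := N) hx)
  rw [Int.abs_eq_natAbs]
  exact_mod_cast this

theorem mem_cube_of_isLatticeBond {r : ℕ} {x y : Site d} (h : IsLatticeBond s(x, y))
    (hx : x ∈ cube r) : y ∈ cube (r + 1) := by
  refine mem_cube.mpr fun j => ?_
  have h1 := abs_le.mp (abs_sub_le_one_of_isLatticeBond h j)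
  have h2 := abs_le.mp (mem_cube.mp hx j)
  push_cast
  exact abs_le.mpr ⟨by linarith [h1.1, h2.1], by linarith⟩

theorem update_mem_cube {r : ℕ} {z : Site d} (hz : z ∈ cube r) (j : Fin d) {c : ℤ}
    (hc : |c| ≤ r) : update z j c ∈ cube r := by
  refine mem_cube.mpr fun i => ?_
  rcases eq_or_ne i j with rfl | hi
  · simpa using hc
  · simpa [update_of_ne hi] using mem_cube.mp hz i

end Cube

section Translation

theorem translateCluster_translateCluster (G : PreGraph d) (u v : Site d) :
    translateCluster (translateCluster G u) v = translateCluster G (u + v) := by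
  simp only [translateCluster, image_image, Sym2.map_map, comp_def, add_assoc]

theorem translateCluster_zero (G : PreGraph d) : translateCluster G 0 = G := by
  simp [translateCluster, Sym2.map_id']

theorem HasCycle.translateCluster {G : PreGraph d} (h : HasCycle G) (u : Site d) :
    HasCycle (translateCluster G u) := by
  obtain ⟨n, f, hn, hf, hb⟩ := h
  exact ⟨n, (f · + u), hn, (add_left_injective u).comp hf,
    fun i => mem_image.mpr ⟨_, hb i, Sym2.map_mk _ _ _⟩⟩

theorem hasCycle_translateCluster_iff {G : PreGraph d} {u : Site d} :
    HasCycle (translateCluster G u) ↔ HasCycle G := by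
  refine ⟨fun h => ?_, fun h => h.translateCluster u⟩
  simpa [translateCluster_translateCluster, translateCluster_zero] using h.translateCluster (-u)

theorem IsBondTree.translateCluster {G : PreGraph d} (hG : IsBondTree G) (u : Site d) :
    IsBondTree (translateCluster G u) := by
  obtain ⟨⟨hne, hlat, hends, hconn⟩, hcyc⟩ := hG
  refine ⟨⟨hne.image _, ?_, ?_, ?_⟩, hasCycle_translateCluster_iff.not.mpr hcyc⟩
  · simp only [_root_.translateCluster, mem_image]
    rintro _ ⟨b, hb, rfl⟩
    exact (hlat b hb).map_add u
  · simp only [_root_.translateCluster, mem_image]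
    rintro _ ⟨b, hb, rfl⟩ _ hx
    obtain ⟨x, hxb, rfl⟩ := Sym2.mem_map.mp hx
    exact ⟨x, hends b hb x hxb, rfl⟩
  · simp only [_root_.translateCluster, mem_image]
    rintro _ ⟨x, hx, rfl⟩ _ ⟨y, hy, rfl⟩
    exact (hconn x hx y hy).lift (· + u) fun a b hab => mem_image.mpr ⟨_, hab, Sym2.map_mk _ _ _⟩

theorem ContainsPattern.translateCluster {G P Q : PreGraph d} (h : ContainsPattern G P Q)
    (u : Site d) :
    ContainsPattern (translateCluster G u) (translateCluster P u) (translateCluster Q u) := by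
  have hinj : Injective (· + u : Site d → Site d) := add_left_injective u
  obtain ⟨hs, hb, hQs, hQb⟩ := h
  refine ⟨image_subset_image hs, image_subset_image hb, ?_, ?_⟩
  · simp only [_root_.translateCluster, mem_image]
    rintro _ ⟨x, hx, rfl⟩
    rw [← mem_image, hinj.mem_finset_image]
    exact hQs x hx
  · simp only [_root_.translateCluster, mem_image]
    rintro _ ⟨b, hb, rfl⟩
    rw [← mem_image, (Sym2.map.injective hinj).mem_finset_image]
    exact hQb b hb

def AgreeOutside (D G G' : PreGraph d) : Prop :=
  G'.sites \ D.sites = G.sites \ D.sites ∧ G'.bonds \ D.bonds = G.bonds \ D.bonds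

theorem AgreeOutside.translateCluster {D G G' : PreGraph d} (h : AgreeOutside D G G')
    (u : Site d) :
    AgreeOutside (translateCluster D u) (translateCluster G u) (translateCluster G' u) := by
  have hinj : Injective (· + u : Site d → Site d) := add_left_injective u
  simp only [AgreeOutside, _root_.translateCluster, ← image_sdiff _ _ hinj,
    ← image_sdiff _ _ (Sym2.map.injective hinj), h.1, h.2, and_self]

end Translation

section Induced

noncomputable def inducedCluster (S : Finset (Site d)) : PreGraph d :=
  open Classical in ⟨S, S.sym2.filter IsLatticeBond⟩

theorem mem_inducedCluster_bonds {S : Finset (Site d)} {b : Sym2 (Site d)} :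
    b ∈ (inducedCluster S).bonds ↔ IsLatticeBond b ∧ ∀ x ∈ b, x ∈ S := by
  simp [inducedCluster, mem_sym2_iff, and_comm]

theorem inducedCluster_bonds_mono {S T : Finset (Site d)} (h : S ⊆ T) :
    (inducedCluster S).bonds ⊆ (inducedCluster T).bonds := by
  intro b
  simp only [mem_inducedCluster_bonds]
  exact fun ⟨hb, hS⟩ => ⟨hb, fun x hx => h (hS x hx)⟩

end Induced

section Cycles

theorem HasCycle.mono {G G' : PreGraph d} (h : HasCycle G) (hGG' : G.bonds ⊆ G'.bonds) :
    HasCycle G' := by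
  obtain ⟨n, f, hn, hf, hb⟩ := h
  exact ⟨n, f, hn, hf, fun i => hGG' (hb i)⟩

/-- Membership in `S` is constant along a cycle of `E₁ ∪ E₂`. -/
theorem HasCycle.of_union_of_separated {V : Finset (Site d)} {E₁ E₂ : Finset (Sym2 (Site d))}
    {S : Set (Site d)} (h₁ : ∀ b ∈ E₁, ∀ x ∈ b, x ∉ S) (h₂ : ∀ b ∈ E₂, ∀ x ∈ b, x ∈ S)
    (h : HasCycle ⟨V, E₁ ∪ E₂⟩) : HasCycle ⟨V, E₁⟩ ∨ HasCycle ⟨V, E₂⟩ := by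
  obtain ⟨n, f, hn, hf, hb⟩ := h
  have hstep : ∀ i, (f (i + 1) ∈ S ↔ f i ∈ S) := fun i => by
    rcases mem_union.mp (hb i) with h | h
    · simp [h₁ _ h _ (Sym2.mem_mk_left ..), h₁ _ h _ (Sym2.mem_mk_right ..)]
    · simp [h₂ _ h _ (Sym2.mem_mk_left ..), h₂ _ h _ (Sym2.mem_mk_right ..)]
  have hconst : ∀ k : ℕ, (f k ∈ S ↔ f 0 ∈ S) := by
    intro k
    induction k with
    | zero => simp
    | succ k ih => rw [Nat.cast_succ, hstep, ih]
  have hall : ∀ i : ZMod n, (f i ∈ S ↔ f 0 ∈ S) := fun i => by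
    have : NeZero n := ⟨by omega⟩
    simpa using hconst i.val
  by_cases h0 : f 0 ∈ S
  · exact .inr ⟨n, f, hn, hf, fun i => (mem_union.mp (hb i)).resolve_left
      fun h => h₁ _ h _ (Sym2.mem_mk_left ..) ((hall i).mpr h0)⟩
  · exact .inl ⟨n, f, hn, hf, fun i => (mem_union.mp (hb i)).resolve_right
      fun h => h0 ((hall i).mp (h₂ _ h _ (Sym2.mem_mk_left ..)))⟩

theorem eq_of_cycle_bond_eq {α : Type*} {n : ℕ} (hn : 3 ≤ n) {f : ZMod n → α} (hf : Injective f)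
    {i j : ZMod n} (h : s(f i, f (i + 1)) = s(f j, f (j + 1))) : i = j := by
  rcases Sym2.eq_iff.mp h with ⟨h1, -⟩ | ⟨h1, h2⟩
  · exact hf h1
  · have h2 : ((2 : ℕ) : ZMod n) = 0 := by
      push_cast
      linear_combination hf h2 - hf h1
    exact absurd (Nat.le_of_dvd two_pos ((ZMod.natCast_eq_zero_iff _ _).mp h2)) (by omega)

/-- The rest of a cycle through the new bond `s(u, v)` is a path from `v` to `u` in `G`. -/
theorem reflTransGen_of_hasCycle_insert {G : PreGraph d} {V : Finset (Site d)} {u v : Site d}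
    (hG : ¬HasCycle G) (h : HasCycle ⟨V, insert s(u, v) G.bonds⟩) :
    ReflTransGen (Adj G) u v := by
  obtain ⟨n, f, hn, hf, hb⟩ := h
  have hbond : ∀ i, s(f i, f (i + 1)) ≠ s(u, v) → Adj G (f i) (f (i + 1)) :=
    fun i hi => (mem_insert.mp (hb i)).resolve_left hi
  obtain ⟨i₀, hi₀⟩ : ∃ i₀, s(f i₀, f (i₀ + 1)) = s(u, v) := by
    by_contra! hne
    exact hG ⟨n, f, hn, hf, fun i => hbond i (hne i)⟩
  have hpath : ReflTransGen (Adj G) (f (i₀ + 1)) (f i₀) := by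
    let g : ℕ → Site d := fun k => f (i₀ + 1 + k)
    have hg : ReflTransGen (Adj G on g) 0 (n - 1) := by
      refine reflTransGen_of_succ_of_le _ (fun k hk => ?_) (Nat.zero_le _)
      have hk : k + 1 < n := by have := (Set.mem_Ico.mp hk).2; omega
      have hsucc : i₀ + 1 + ((k + 1 : ℕ) : ZMod n) = i₀ + 1 + k + 1 := by push_cast; ring
      simp only [onFun, g, Order.succ_eq_add_one, hsucc]
      refine hbond _ fun heq => ?_
      have : ((k + 1 : ℕ) : ZMod n) = 0 := by
        push_cast
        linear_combination eq_of_cycle_bond_eq hn hf (heq.trans hi₀.symm)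
      exact absurd (Nat.le_of_dvd k.succ_pos ((ZMod.natCast_eq_zero_iff _ _).mp this)) (by omega)
    have hlast : i₀ + 1 + ((n - 1 : ℕ) : ZMod n) = i₀ := by
      rw [Nat.cast_sub (by omega), ZMod.natCast_self]
      ring
    simpa [g, hlast, onFun] using hg.lift g fun _ _ h => h
  rcases Sym2.eq_iff.mp hi₀ with ⟨rfl, rfl⟩ | ⟨rfl, rfl⟩
  · exact symm hpath
  · exact hpath

/-- A maximal acyclic set of bonds between `F₀` and `E` is a spanning tree. -/
theorem exists_isBondTree_of_subset {V : Finset (Site d)} {E F₀ : Finset (Sym2 (Site d))}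
    (hE : IsBondAnimal ⟨V, E⟩) (hF₀E : F₀ ⊆ E) (hF₀ : ¬HasCycle ⟨V, F₀⟩) :
    ∃ F, F₀ ⊆ F ∧ F ⊆ E ∧ IsBondTree ⟨V, F⟩ := by
  classical
  obtain ⟨F, hFmax⟩ :=
    (E.powerset.filter fun F => F₀ ⊆ F ∧ ¬HasCycle ⟨V, F⟩).exists_maximal
      ⟨F₀, by simp [hF₀E, hF₀]⟩
  obtain ⟨hFE, hF₀F, hF⟩ : F ⊆ E ∧ F₀ ⊆ F ∧ ¬HasCycle ⟨V, F⟩ := by simpa using hFmax.prop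
  have hadj : ∀ u v, s(u, v) ∈ E → ReflTransGen (Adj ⟨V, F⟩) u v := by
    intro u v huv
    by_cases hc : HasCycle ⟨V, insert s(u, v) F⟩
    · exact reflTransGen_of_hasCycle_insert hF hc
    · refine .single (hFmax.2 ?_ (subset_insert _ _) (mem_insert_self _ _))
      simp [insert_subset_iff, huv, hFE, hF₀F.trans (subset_insert _ _), hc]
  obtain ⟨hne, hlat, hends, hconn⟩ := hE
  exact ⟨F, hF₀F, hFE, ⟨hne, fun b hb => hlat b (hFE hb), fun b hb => hends b (hFE hb),
    fun x hx y hy => reflTransGen_closed hadj _ _ (hconn x hx y hy)⟩, hF⟩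

end Cycles

section Annulus

theorem reflTransGen_update {S : Finset (Site d)} (z : Site d) (j : Fin d) {a b : ℤ}
    (hS : ∀ c ∈ Set.uIcc a b, update z j c ∈ S) :
    ReflTransGen (Adj (inducedCluster S)) (update z j a) (update z j b) := by
  wlog hab : a ≤ b generalizing a b
  · exact symm (this (Set.uIcc_comm a b ▸ hS) (le_of_not_ge hab))
  refine (reflTransGen_of_succ_of_le (Adj (inducedCluster S) on update z j) (fun c hc => ?_)
    hab).lift _ fun _ _ h => h
  have hc := Set.mem_Ico.mp hc
  rw [onFun, Order.succ_eq_add_one]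
  refine mem_inducedCluster_bonds.mpr ⟨isLatticeBond_update_add_one z j c, fun x hx => ?_⟩
  rcases Sym2.mem_iff.mp hx with rfl | rfl
  · exact hS c (Set.mem_uIcc_of_le hc.1 hc.2.le)
  · exact hS (c + 1) (Set.mem_uIcc_of_le (by omega) (by omega))

noncomputable def annulus (r R : ℕ) : Finset (Site d) := cube R \ cube r

theorem mem_annulus_of_lt_abs {r R : ℕ} {z : Site d} (hz : z ∈ cube R) {i : Fin d}
    (hi : r < |z i|) : z ∈ annulus r R :=
  mem_sdiff.mpr ⟨hz, fun h => (mem_cube.mp h i).not_gt hi⟩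

theorem reflTransGen_update_annulus {r R : ℕ} {z : Site d} (hz : z ∈ cube R) (j : Fin d)
    {b : ℤ} (hb : |b| ≤ R) {i : Fin d} (hi : ∀ c ∈ Set.uIcc (z j) b, r < |update z j c i|) :
    ReflTransGen (Adj (inducedCluster (annulus r R))) z (update z j b) := by
  have hzj := abs_le.mp (mem_cube.mp hz j)
  simpa using reflTransGen_update z j fun c hc => mem_annulus_of_lt_abs
    (update_mem_cube hz j (abs_le.mpr (Set.uIcc_subset_Icc hzj (abs_le.mp hb) hc))) (hi c hc)

theorem reflTransGen_annulus_corner_of_eq {r R : ℕ} (hrR : r < R) {z : Site d} (hz : z ∈ cube R)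
    {j : Fin d} (hzj : z j = R) :
    ReflTransGen (Adj (inducedCluster (annulus r R))) z (fun _ => (R : ℤ)) := by
  have hR : |(R : ℤ)| = R := abs_of_nonneg (Nat.cast_nonneg R)
  suffices ∀ s : Finset (Fin d), ∀ w ∈ cube R, w j = R → (∀ k ∉ s, w k = R) →
      ReflTransGen (Adj (inducedCluster (annulus r R))) w (fun _ => (R : ℤ)) from
    this univ z hz hzj (by simp)
  intro s
  induction s using Finset.induction_on with
  | empty =>
    intro w _ _ hw
    rw [show w = fun _ => (R : ℤ) from funext fun k => hw k (notMem_empty k)]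
  | insert k s _ ih =>
    intro w hw hwj hws
    have hwk : update w k R j = R := by
      rcases eq_or_ne j k with rfl | hjk
      · exact update_self ..
      · rw [update_of_ne hjk, hwj]
    refine .trans (reflTransGen_update_annulus hw k hR.le (i := j) fun c hc => ?_)
      (ih _ (update_mem_cube hw k hR.le) hwk fun k' hk' => ?_)
    · rcases eq_or_ne j k with rfl | hjk
      · rw [hwj, Set.uIcc_self, Set.mem_singleton_iff] at hc
        simpa [hc] using hrR
      · simpa [update_of_ne hjk, hwj] using hrR
    · rcases eq_or_ne k' k with rfl | hk
      · exact update_self ..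
      · rw [update_of_ne hk]
        exact hws k' (by simp [hk, hk'])

theorem reflTransGen_annulus_corner (hd : 2 ≤ d) {r R : ℕ} (hrR : r < R) {z : Site d}
    (hz : z ∈ annulus r R) :
    ReflTransGen (Adj (inducedCluster (annulus r R))) z (fun _ => (R : ℤ)) := by
  have hR : |(R : ℤ)| = R := abs_of_nonneg (Nat.cast_nonneg R)
  obtain ⟨hzR, hzr⟩ := mem_sdiff.mp hz
  obtain ⟨j, hj⟩ : ∃ j, r < |z j| := by
    by_contra! h
    exact hzr (mem_cube.mpr h)
  have hzj := abs_le.mp (mem_cube.mp hzR j)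
  rcases lt_abs.mp hj with hpos | hneg
  · refine .trans (reflTransGen_update_annulus hzR j hR.le (i := j) fun c hc => ?_)
      (reflTransGen_annulus_corner_of_eq hrR (update_mem_cube hzR j hR.le) (update_self ..))
    rw [Set.uIcc_of_le hzj.2] at hc
    rw [update_self]
    exact lt_abs.mpr (.inl (by linarith [hc.1]))
  · have : Nontrivial (Fin d) := Fin.nontrivial_iff_two_le.mpr hd
    obtain ⟨k, hkj⟩ := exists_ne j
    have hR' : |(-R : ℤ)| ≤ R := by simp
    have hz₁ := update_mem_cube hzR j hR'
    refine .trans (reflTransGen_update_annulus hzR j hR' (i := j) fun c hc => ?_) <|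
      .trans (reflTransGen_update_annulus hz₁ k hR.le (i := j) fun c _ => ?_)
      (reflTransGen_annulus_corner_of_eq hrR (update_mem_cube hz₁ k hR.le) (update_self ..))
    · rw [Set.uIcc_of_ge hzj.1] at hc
      rw [update_self]
      exact lt_abs.mpr (.inr (by linarith [hc.2]))
    · simpa [update_of_ne hkj.symm] using hrR

end Annulus

section Insertion

theorem notMem_cube_of_notMem_inducedCluster_bonds {R : ℕ} {b : Sym2 (Site d)}
    (hb : IsLatticeBond b) (hbR : b ∉ (inducedCluster (cube (R + 1))).bonds) {x : Site d}
    (hx : x ∈ b) : x ∉ cube R := by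
  intro hxR
  obtain ⟨w, rfl⟩ := Sym2.mem_iff_exists.mp hx
  refine hbR (mem_inducedCluster_bonds.mpr ⟨hb, fun y hy => ?_⟩)
  rcases Sym2.mem_iff.mp hy with rfl | rfl
  · exact cube_mono (Nat.le_succ R) hxR
  · exact mem_cube_of_isLatticeBond hb hxR

variable (G H P₂ : PreGraph d) (r m : ℕ)

noncomputable def insertion : PreGraph d :=
  ⟨G.sites \ cube (m + 1) ∪ (annulus r (m + 1) ∪ H.sites),
    G.bonds \ (inducedCluster (cube (m + 1))).bonds ∪
      ((inducedCluster (annulus r (m + 1) ∪ H.sites)).bonds \ P₂.bonds)⟩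

variable {G H P₂ r m}

theorem mem_annulus_of_mem_bonds_sdiff (hG : ∀ b ∈ G.bonds, IsLatticeBond b) (hrm : r ≤ m)
    {b : Sym2 (Site d)} (hb : b ∈ G.bonds \ (inducedCluster (cube (m + 1))).bonds)
    {x : Site d} (hx : x ∈ b) (hxm : x ∈ cube (m + 1)) : x ∈ annulus r (m + 1) := by
  obtain ⟨hbG, hbD⟩ := mem_sdiff.mp hb
  exact mem_sdiff.mpr ⟨hxm, fun hxr =>
    notMem_cube_of_notMem_inducedCluster_bonds (hG b hbG) hbD hx (cube_mono hrm hxr)⟩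

theorem bonds_subset_insertion_bonds (hH : IsBondAnimal H) (hHP₂ : ∀ b ∈ P₂.bonds, b ∉ H.bonds) :
    H.bonds ⊆ (insertion G H P₂ r m).bonds := fun b hb =>
  mem_union_right _ (mem_sdiff.mpr ⟨mem_inducedCluster_bonds.mpr
    ⟨hH.2.1 b hb, fun x hx => mem_union_right _ (hH.2.2.1 b hb x hx)⟩, fun hP => hHP₂ b hP hb⟩)

theorem reflTransGen_insertion_corner (hd : 2 ≤ d) (hG : IsBondAnimal G) (hG0 : 0 ∈ G.sites)
    (hH : IsBondAnimal H) (hHP₂ : ∀ b ∈ P₂.bonds, b ∉ H.bonds)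
    (hP₂ : ∀ b ∈ P₂.bonds, ∀ x ∈ b, x ∈ cube r) (hHm : H.sites ⊆ cube m) (hrm : r ≤ m)
    {h : Site d} (hh : h ∈ H.sites) (hhr : h ∉ cube r) {z : Site d}
    (hz : z ∈ (insertion G H P₂ r m).sites) :
    ReflTransGen (Adj (insertion G H P₂ r m)) z (fun _ => ((m + 1 : ℕ) : ℤ)) := by
  have hann : ∀ z ∈ annulus r (m + 1),
      ReflTransGen (Adj (insertion G H P₂ r m)) z (fun _ => ((m + 1 : ℕ) : ℤ)) := by
    refine fun z hz => ReflTransGen.mono (fun a b hab => ?_) _ _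
      (reflTransGen_annulus_corner hd (by omega) hz)
    obtain ⟨hlat, hends⟩ := mem_inducedCluster_bonds.mp hab
    refine mem_union_right _ (mem_sdiff.mpr ⟨mem_inducedCluster_bonds.mpr
      ⟨hlat, fun x hx => mem_union_left _ (hends x hx)⟩, fun hP => ?_⟩)
    exact (mem_sdiff.mp (hends a (Sym2.mem_mk_left ..))).2 (hP₂ _ hP a (Sym2.mem_mk_left ..))
  have hH_reach : ∀ z ∈ H.sites,
      ReflTransGen (Adj (insertion G H P₂ r m)) z (fun _ => ((m + 1 : ℕ) : ℤ)) :=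
    fun z hz => .trans (ReflTransGen.mono (fun _ _ hab => bonds_subset_insertion_bonds
      hH hHP₂ hab) _ _ (hH.2.2.2 z hz h hh))
      (hann h (mem_sdiff.mpr ⟨cube_mono (Nat.le_succ m) (hHm hh), hhr⟩))
  have hG_reach : ∀ z, ReflTransGen (Adj G) 0 z → z ∉ cube (m + 1) →
      ReflTransGen (Adj (insertion G H P₂ r m)) z (fun _ => ((m + 1 : ℕ) : ℤ)) := by
    intro z hz
    induction hz with
    | refl => exact fun h0 => absurd (zero_mem_cube _) h0
    | @tail b c _ hbc ih =>
      intro hc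
      have hkept : s(b, c) ∈ G.bonds \ (inducedCluster (cube (m + 1))).bonds :=
        mem_sdiff.mpr ⟨hbc, fun hD => hc ((mem_inducedCluster_bonds.mp hD).2 c
          (Sym2.mem_mk_right ..))⟩
      refine .head (symm (mem_union_left _ hkept : Adj (insertion G H P₂ r m) b c)) ?_
      by_cases hb : b ∈ cube (m + 1)
      · exact hann b (mem_annulus_of_mem_bonds_sdiff hG.2.1 hrm hkept (Sym2.mem_mk_left ..) hb)
      · exact ih hb
  rcases mem_union.mp hz with hz | hz
  · exact hG_reach z (hG.2.2.2 0 hG0 z (mem_sdiff.mp hz).1) (mem_sdiff.mp hz).2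
  · rcases mem_union.mp hz with hz | hz
    · exact hann z hz
    · exact hH_reach z hz

theorem insertion_isBondAnimal (hd : 2 ≤ d) (hG : IsBondAnimal G) (hG0 : 0 ∈ G.sites)
    (hH : IsBondAnimal H) (hHP₂ : ∀ b ∈ P₂.bonds, b ∉ H.bonds)
    (hP₂ : ∀ b ∈ P₂.bonds, ∀ x ∈ b, x ∈ cube r) (hHm : H.sites ⊆ cube m) (hrm : r ≤ m)
    {h : Site d} (hh : h ∈ H.sites) (hhr : h ∉ cube r) :
    IsBondAnimal (insertion G H P₂ r m) := by
  refine ⟨⟨h, mem_union_right _ (mem_union_right _ hh)⟩, fun b hb => ?_, fun b hb x hx => ?_,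
    fun x hx y hy => ?_⟩
  · rcases mem_union.mp hb with hb | hb
    · exact hG.2.1 b (mem_sdiff.mp hb).1
    · exact (mem_inducedCluster_bonds.mp (mem_sdiff.mp hb).1).1
  · rcases mem_union.mp hb with hb | hb
    · by_cases hxm : x ∈ cube (m + 1)
      · exact mem_union_right _
          (mem_union_left _ (mem_annulus_of_mem_bonds_sdiff hG.2.1 hrm hb hx hxm))
      · exact mem_union_left _ (mem_sdiff.mpr ⟨hG.2.2.1 b (mem_sdiff.mp hb).1 x hx, hxm⟩)
    · exact mem_union_right _ ((mem_inducedCluster_bonds.mp (mem_sdiff.mp hb).1).2 x hx)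
  · exact (reflTransGen_insertion_corner hd hG hG0 hH hHP₂ hP₂ hHm hrm hh hhr hx).trans
      (symm (reflTransGen_insertion_corner hd hG hG0 hH hHP₂ hP₂ hHm hrm hh hhr hy))

theorem containsPattern_insertion {P₁ : PreGraph d} {F : Finset (Sym2 (Site d))}
    (hG : ∀ b ∈ G.bonds, IsLatticeBond b) (hHP : ContainsPattern H P₁ P₂)
    (hP₂s : ∀ x ∈ P₂.sites, x ∈ cube r) (hP₂ : ∀ b ∈ P₂.bonds, ∀ x ∈ b, x ∈ cube r)
    (hrm : r ≤ m) (hHF : H.bonds ⊆ F) (hFI : F ⊆ (insertion G H P₂ r m).bonds) :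
    ContainsPattern ⟨(insertion G H P₂ r m).sites, F⟩ P₁ P₂ := by
  refine ⟨hHP.1.trans (subset_union_right.trans subset_union_right), hHP.2.1.trans hHF,
    fun x hx hxI => ?_, fun b hb hbF => ?_⟩
  · rcases mem_union.mp hxI with hxG | hxI
    · exact (mem_sdiff.mp hxG).2 (cube_mono (by omega) (hP₂s x hx))
    · rcases mem_union.mp hxI with hxA | hxH
      · exact (mem_sdiff.mp hxA).2 (hP₂s x hx)
      · exact hHP.2.2.1 x hx hxH
  · rcases mem_union.mp (hFI hbF) with hbG | hbI
    · obtain ⟨hbG, hbD⟩ := mem_sdiff.mp hbG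
      exact notMem_cube_of_notMem_inducedCluster_bonds (hG b hbG) hbD (Sym2.out_fst_mem b)
        (cube_mono hrm (hP₂ b hb _ (Sym2.out_fst_mem b)))
    · exact (mem_sdiff.mp hbI).2 hb

theorem agreeOutside_insertion {F : Finset (Sym2 (Site d))} (hHm : H.sites ⊆ cube m)
    (hGF : G.bonds \ (inducedCluster (cube (m + 1))).bonds ⊆ F)
    (hFI : F ⊆ (insertion G H P₂ r m).bonds) :
    AgreeOutside (inducedCluster (cube (m + 1))) G ⟨(insertion G H P₂ r m).sites, F⟩ := by
  have hinner : annulus r (m + 1) ∪ H.sites ⊆ cube (m + 1) :=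
    union_subset sdiff_subset (hHm.trans (cube_mono (Nat.le_succ m)))
  refine ⟨?_, subset_antisymm (fun b hb => ?_) fun b hb =>
    mem_sdiff.mpr ⟨hGF hb, (mem_sdiff.mp hb).2⟩⟩
  · change (G.sites \ cube (m + 1) ∪ (annulus r (m + 1) ∪ H.sites)) \ cube (m + 1) = _
    rw [union_sdiff_distrib, _root_.sdiff_idem, sdiff_eq_empty_iff_subset.mpr hinner, union_empty]
    rfl
  · obtain ⟨hbF, hbD⟩ := mem_sdiff.mp hb
    rcases mem_union.mp (hFI hbF) with hbG | hbI
    · exact hbG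
    · exact absurd (inducedCluster_bonds_mono hinner (mem_sdiff.mp hbI).1) hbD

theorem exists_isBondTree_insertion {P₁ : PreGraph d} (hd : 2 ≤ d) (hG : IsBondTree G)
    (hG0 : 0 ∈ G.sites) (hH : IsBondTree H) (hHP : ContainsPattern H P₁ P₂)
    (hP₂s : ∀ x ∈ P₂.sites, x ∈ cube r) (hP₂ : ∀ b ∈ P₂.bonds, ∀ x ∈ b, x ∈ cube r)
    (hHm : H.sites ⊆ cube m) (hrm : r ≤ m) {h : Site d} (hh : h ∈ H.sites) (hhr : h ∉ cube r) :
    ∃ G', IsBondTree G' ∧ ContainsPattern G' P₁ P₂ ∧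
      AgreeOutside (inducedCluster (cube (m + 1))) G G' := by
  have hF₀ : ¬HasCycle ⟨_, G.bonds \ (inducedCluster (cube (m + 1))).bonds ∪ H.bonds⟩ :=
    fun hc => (HasCycle.of_union_of_separated (S := ↑(cube m : Finset (Site d)))
      (fun b hb _ hx => notMem_cube_of_notMem_inducedCluster_bonds
        (hG.1.2.1 b (mem_sdiff.mp hb).1) (mem_sdiff.mp hb).2 hx)
      (fun b hb x hx => hHm (hH.1.2.2.1 b hb x hx)) hc).elim
      (fun h => hG.2 (h.mono sdiff_subset)) hH.2
  obtain ⟨F, hF₀F, hFI, hF⟩ := exists_isBondTree_of_subset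
    (V := (insertion G H P₂ r m).sites)
    (insertion_isBondAnimal hd hG.1 hG0 hH.1 hHP.2.2.2 hP₂ hHm hrm hh hhr)
    (union_subset subset_union_left (bonds_subset_insertion_bonds hH.1 hHP.2.2.2)) hF₀
  exact ⟨_, hF, containsPattern_insertion hG.1.2.1 hHP hP₂s hP₂ hrm
    (subset_union_right.trans hF₀F) hFI,
    agreeOutside_insertion hHm (subset_union_left.trans hF₀F) hFI⟩

end Insertion

theorem exists_insertion_at_origin {P₁ P₂ : PreGraph d} (hd : 2 ≤ d)
    (hproper : ProperFor IsBondTree P₁ P₂) :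
    ∃ D : PreGraph d, 0 ∈ D.sites ∧ ∀ G, IsBondTree G → 0 ∈ G.sites →
      ∃ G', IsBondTree G' ∧ ContainsPattern G' P₁ P₂ ∧ AgreeOutside D G G' := by
  classical
  obtain ⟨r, hr⟩ := exists_subset_cube (P₂.sites ∪ P₂.bonds.biUnion Sym2.toFinset)
  obtain ⟨_, ⟨H, hH, rfl, hHP⟩, hcard⟩ := hproper.exists_gt ((2 * r + 1) ^ d)
  obtain ⟨m, hm⟩ := exists_subset_cube H.sites
  obtain ⟨h, hh, hhr⟩ :=
    exists_mem_notMem_of_card_lt_card (s := cube r) (t := H.sites) (by rwa [card_cube])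
  refine ⟨inducedCluster (cube (max r m + 1)), zero_mem_cube _, fun G hG hG0 =>
    exists_isBondTree_insertion hd hG hG0 hH hHP (fun x hx => hr (mem_union_left _ hx))
      (fun b hb x hx => hr (mem_union_right _ (mem_biUnion.mpr ⟨b, hb, Sym2.mem_toFinset.mpr hx⟩)))
      (hm.trans (cube_mono (le_max_right r m))) (le_max_left r m) hh hhr⟩

theorem ca4_bond_trees_general
    (d : ℕ) (hd : 2 ≤ d)
    (P₁ P₂ : PreGraph d)
    (hproper : ProperFor IsBondTree P₁ P₂) :
    ∃ D : PreGraph d,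
      ∀ G : PreGraph d, IsBondTree G → ∀ y ∈ G.sites,
        ∃ (G' : PreGraph d) (t : Site d),
          IsBondTree G' ∧
          y ∈ (translateCluster D t).sites ∧
          ContainsPattern G' (translateCluster P₁ t) (translateCluster P₂ t) ∧
          G'.sites \ (translateCluster D t).sites
            = G.sites \ (translateCluster D t).sites ∧
          G'.bonds \ (translateCluster D t).bonds
            = G.bonds \ (translateCluster D t).bonds := by
  obtain ⟨D, hD0, hD⟩ := exists_insertion_at_origin hd hproper
  refine ⟨D, fun G hG y hy => ?_⟩
  obtain ⟨G', hG', hpat, hagree⟩ := hD (translateCluster G (-y)) (hG.translateCluster (-y))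
    (mem_image.mpr ⟨y, hy, add_neg_cancel y⟩)
  have hback := hagree.translateCluster y
  rw [translateCluster_translateCluster, neg_add_cancel, translateCluster_zero] at hback
  exact ⟨translateCluster G' y, y, hG'.translateCluster y, mem_image.mpr ⟨0, hD0, zero_add y⟩,
    hpat.translateCluster y, hback⟩

/-- **Local insertion of patterns into bond trees** (Proposition 3.1, Axiom (CA4)
for bond trees on `ℤ^d`). -/
theorem ca4_bond_trees
    (d : ℕ) (hd : 2 ≤ d)
    (P₁ P₂ : PreGraph d) (hP : IsPattern P₁ P₂)
    (hproper : ProperFor IsBondTree P₁ P₂) :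
    ∃ D : PreGraph d,
      ∀ G : PreGraph d, IsBondTree G → ∀ y ∈ G.sites,
        ∃ (G' : PreGraph d) (t : Site d),
          IsBondTree G' ∧
          y ∈ (translateCluster D t).sites ∧
          ContainsPattern G' (translateCluster P₁ t) (translateCluster P₂ t) ∧
          G'.sites \ (translateCluster D t).sites
            = G.sites \ (translateCluster D t).sites ∧
          G'.bonds \ (translateCluster D t).bonds
            = G.bonds \ (translateCluster D t).bonds :=
  ca4_bond_trees_general d hd P₁ P₂ hproper
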